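/- arXiv:2502.04087 — 3 statements merged into one kernel-verified Lean document; each statement's English description precedes it below -/
import Mathlib

section
/- In the lexicographic product G·H with G connected and having at least one edge, for any efficient k-limited dominating broadcast f and any vertex u of G, there is at most one vertex v of H with f(u,v) ≥ 1. -/
open SimpleGraph

/-- A vertex `u` is `f`-dominated by exactly one vertex, and all costs are at most `k`:
`f` is an efficient `k`-limited dominating broadcast. -/
def IsELDB {V : Type*} (G : SimpleGraph V) (k : ℕ) (f : V → ℕ) : Prop :=
  (∀ v, f v ≤ k) ∧ ∀ u, ∃! v, 1 ≤ f v ∧ G.dist u v ≤ f v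

/-- Eccentricity of a vertex. -/
noncomputable def ecc {V : Type*} (G : SimpleGraph V) [Fintype V] (v : V) : ℕ :=
  Finset.univ.sup (fun u => G.dist v u)

/-- Radius of a graph. -/
noncomputable def grad {V : Type*} (G : SimpleGraph V) [Fintype V] [Nonempty V] : ℕ :=
  Finset.univ.inf' Finset.univ_nonempty (ecc G)

/-- Total cost of a broadcast. -/
def cost {V : Type*} [Fintype V] (f : V → ℕ) : ℕ := ∑ v, f v

/-- The lexicographic product of two simple graphs. -/
def lexProd {α β : Type*} (G : SimpleGraph α) (H : SimpleGraph β) :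
    SimpleGraph (α × β) where
  Adj x y := G.Adj x.1 y.1 ∨ (x.1 = y.1 ∧ H.Adj x.2 y.2)
  symm := by
    constructor
    rintro x y (h | ⟨e, h⟩)
    · exact Or.inl h.symm
    · exact Or.inr ⟨e.symm, h.symm⟩
  loopless := by
    constructor
    rintro x (h | ⟨_, h⟩)
    · exact G.irrefl h
    · exact H.irrefl h

/-- In G·H, each H-layer contains at most one broadcasting vertex. -/
theorem stmt11 {α β : Type*} [Fintype α] [Fintype β]
    (G : SimpleGraph α) (H : SimpleGraph β)
    (hG : G.Connected) (hGedge : ∃ a b, G.Adj a b)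
    (hHcard : 2 ≤ Fintype.card β)
    (k : ℕ) (f : α × β → ℕ) (hf : IsELDB (lexProd G H) k f) (u : α) :
    ∀ v₁ v₂ : β, 1 ≤ f (u, v₁) → 1 ≤ f (u, v₂) → v₁ = v₂ := by
  intro v1 v2 h1 h2
  -- u has a neighbor a in G
  obtain ⟨a, b, hab⟩ := hGedge
  have hnbr : ∃ c, G.Adj u c := by
    by_cases hu : u = a
    · exact ⟨b, hu ▸ hab⟩
    · obtain ⟨p⟩ := hG.preconnected u a
      exact ⟨p.getVert 1, p.adj_snd (SimpleGraph.Walk.not_nil_of_ne hu)⟩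
  obtain ⟨c, hc⟩ := hnbr
  -- (c, v1) is adjacent to both (u, v1) and (u, v2)
  have hadj1 : (lexProd G H).Adj (c, v1) (u, v1) := Or.inl hc.symm
  have hadj2 : (lexProd G H).Adj (c, v1) (u, v2) := Or.inl hc.symm
  have hd1 : (lexProd G H).dist (c, v1) (u, v1) ≤ 1 := by
    simpa using SimpleGraph.dist_le (SimpleGraph.Walk.cons hadj1 SimpleGraph.Walk.nil)
  have hd2 : (lexProd G H).dist (c, v1) (u, v2) ≤ 1 := by
    simpa using SimpleGraph.dist_le (SimpleGraph.Walk.cons hadj2 SimpleGraph.Walk.nil)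
  obtain ⟨y, _, huniq⟩ := hf.2 (c, v1)
  have e1 := huniq (u, v1) ⟨h1, le_trans hd1 h1⟩
  have e2 := huniq (u, v2) ⟨h2, le_trans hd2 h2⟩
  have : (u, v1) = ((u, v2) : α × β) := e1.trans e2.symm
  exact congrArg Prod.snd this
end

section
/- For the lexicographic product: mcr(G·H) ≥ mcr(G), i.e., if G·H admits an efficient p-limited dominating broadcast, then G admits an efficient p-limited dominating broadcast. -/
open SimpleGraph

section Aux

variable {α β : Type*} {G : SimpleGraph α} {H : SimpleGraph β}

/-- Embedding of a G-layer. -/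
def homFst (G : SimpleGraph α) (H : SimpleGraph β) (b : β) : G →g lexProd G H where
  toFun u := (u, b)
  map_rel' h := Or.inl h

/-- Embedding of an H-layer. -/
def homSnd (G : SimpleGraph α) (H : SimpleGraph β) (a : α) : H →g lexProd G H where
  toFun b := (a, b)
  map_rel' h := Or.inr ⟨rfl, h⟩

lemma lex_walk_length_ge (hG : G.Connected) {x y : α × β}
    (W : (lexProd G H).Walk x y) : G.dist x.1 y.1 ≤ W.length := by
  induction W with
  | nil => simp
  | cons h W ih =>
    rename_i u v w
    rcases h with h | ⟨e, h⟩
    · calc G.dist u.1 w.1 ≤ G.dist u.1 v.1 + G.dist v.1 w.1 := hG.dist_triangle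
        _ ≤ 1 + W.length := by
            have h1 : G.dist u.1 v.1 ≤ 1 := by
              simpa using SimpleGraph.dist_le (SimpleGraph.Walk.cons h .nil)
            omega
        _ = _ := by show _ = W.length + 1; omega
    · have he : G.dist u.1 w.1 = G.dist v.1 w.1 := by rw [e]
      rw [he]
      calc G.dist v.1 w.1 ≤ W.length := ih
        _ ≤ _ := by show W.length ≤ W.length + 1; omega

lemma lex_connected (hG : G.Connected) (hH : H.Connected) :
    (lexProd G H).Connected := by
  have hne : Nonempty (α × β) := by
    have h1 := hG.nonempty; have h2 := hH.nonempty
    exact ⟨(Classical.arbitrary _, Classical.arbitrary _)⟩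
  rw [SimpleGraph.connected_iff_exists_forall_reachable]
  inhabit (α × β)
  refine ⟨default, fun x => ?_⟩
  have r1 : (lexProd G H).Reachable (default : α × β) ((default : α × β).1, x.2) :=
    ((hH (default : α × β).2 x.2).map (homSnd G H (default : α × β).1))
  have r2 : (lexProd G H).Reachable ((default : α × β).1, x.2) (x.1, x.2) :=
    ((hG (default : α × β).1 x.1).map (homFst G H x.2))
  exact r1.trans (by simpa using r2)

lemma lex_dist_le (hG : G.Connected) {u u' : α} (b b' : β) (hne : u ≠ u') :
    (lexProd G H).dist (u, b) (u', b') ≤ G.dist u u' := by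
  obtain ⟨W, hW⟩ := hG.exists_walk_length_eq_dist u u'
  cases W with
  | nil => exact absurd rfl hne
  | cons h W =>
    rename_i v
    have hadj : (lexProd G H).Adj (u, b) (v, b') := Or.inl h
    have := SimpleGraph.dist_le
      (SimpleGraph.Walk.cons hadj (W.map (homFst G H b')))
    rw [← hW]
    exact le_trans this (by show (W.map (homFst G H b')).length + 1 ≤ W.length + 1; rw [SimpleGraph.Walk.length_map])

lemma lex_dist_ge (hG : G.Connected) (hH : H.Connected) (x y : α × β) :
    G.dist x.1 y.1 ≤ (lexProd G H).dist x y := by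
  obtain ⟨W, hW⟩ := (lex_connected hG hH).exists_walk_length_eq_dist x y
  rw [← hW]
  exact lex_walk_length_ge hG W

end Aux

/-- mcr(G·H) ≥ mcr(G): a p-ELDB of G·H yields a p-ELDB of G. -/
theorem stmt12 {α β : Type*} [Fintype α] [Fintype β] [Nonempty β]
    (G : SimpleGraph α) (H : SimpleGraph β)
    (hG : G.Connected) (hH : H.Connected)
    (p : ℕ) (f : α × β → ℕ) (hf : IsELDB (lexProd G H) p f) :
    ∃ g : α → ℕ, IsELDB G p g := by
  classical
  obtain ⟨hfp, hfd⟩ := hf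
  rcases isEmpty_or_nonempty α with hα | hα
  · exact ⟨fun _ => 0, fun v => Nat.zero_le p, fun u => isEmptyElim u⟩
  rcases subsingleton_or_nontrivial α with hαs | hαn
  · -- single vertex case
    obtain ⟨a⟩ := hα; obtain ⟨b⟩ := ‹Nonempty β›
    obtain ⟨z, ⟨hz1, _⟩, _⟩ := hfd (a, b)
    have hp : 1 ≤ p := le_trans hz1 (hfp z)
    refine ⟨fun _ => 1, fun v => hp, fun u => ⟨u, ⟨le_refl 1, by rw [SimpleGraph.dist_self]; exact Nat.zero_le _⟩, ?_⟩⟩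
    intro v _; exact Subsingleton.elim v u
  -- main case
  -- at most one broadcaster per layer
  have key : ∀ v w₁ w₂, 1 ≤ f (v, w₁) → 1 ≤ f (v, w₂) → w₁ = w₂ := by
    intro v w₁ w₂ h1 h2
    obtain ⟨u, hu⟩ := exists_ne v
    obtain ⟨W, -⟩ := hG.exists_walk_length_eq_dist v u
    cases W with
    | nil => exact absurd rfl hu.symm
    | cons hadj W =>
      rename_i v'
      have hvv' : v ≠ v' := hadj.ne
      have hd : G.dist v' v ≤ 1 := by
        simpa using SimpleGraph.dist_le (SimpleGraph.Walk.cons hadj.symm .nil)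
      have dom : ∀ w, 1 ≤ f (v, w) →
          (lexProd G H).dist (v', w₁) (v, w) ≤ f (v, w) := by
        intro w hw
        calc (lexProd G H).dist (v', w₁) (v, w) ≤ G.dist v' v :=
              lex_dist_le hG _ _ hvv'.symm
          _ ≤ 1 := hd
          _ ≤ f (v, w) := hw
      obtain ⟨z, hz, huniq⟩ := hfd (v', w₁)
      have e1 := huniq (v, w₁) ⟨h1, dom w₁ h1⟩
      have e2 := huniq (v, w₂) ⟨h2, dom w₂ h2⟩
      have := e1.trans e2.symm
      exact (Prod.mk.injEq .. ▸ this).2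
  set g : α → ℕ := fun v => ∑ w, f (v, w) with hg
  have gval : ∀ v w, 1 ≤ f (v, w) → g v = f (v, w) := by
    intro v w hw
    rw [hg]
    refine Finset.sum_eq_single_of_mem w (Finset.mem_univ w) ?_
    intro w' _ hne
    by_contra h
    exact hne (key v w' w (by omega) hw)
  have gpos : ∀ v, 1 ≤ g v → ∃ w, 1 ≤ f (v, w) ∧ g v = f (v, w) := by
    intro v hv
    by_contra h
    push_neg at h
    have : g v = 0 := by
      rw [hg]
      refine Finset.sum_eq_zero fun w _ => ?_
      rcases Nat.eq_zero_or_pos (f (v, w)) with h0 | h0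
      · exact h0
      · exact absurd (gval v w h0) (by intro e; exact absurd h0 (by
          have := h w; omega))
    omega
  obtain ⟨b₀⟩ := ‹Nonempty β›
  refine ⟨g, fun v => ?_, fun u => ?_⟩
  · -- bound
    rcases Nat.eq_zero_or_pos (g v) with h0 | h0
    · omega
    · obtain ⟨w, hw, he⟩ := gpos v h0
      rw [he]; exact hfp (v, w)
  · -- domination
    obtain ⟨⟨v, w⟩, ⟨hz1, hz2⟩, huniq⟩ := hfd (u, b₀)
    have hgv : g v = f (v, w) := gval v w hz1
    have hdom : G.dist u v ≤ g v := by
      rcases eq_or_ne u v with rfl | hne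
      · rw [SimpleGraph.dist_self]; exact Nat.zero_le _
      · rw [hgv]
        calc G.dist u v ≤ (lexProd G H).dist (u, b₀) (v, w) :=
              lex_dist_ge hG hH (u, b₀) (v, w)
          _ ≤ f (v, w) := hz2
    have hduv : u ≠ v → G.dist u v ≤ f (v, w) := fun hne => hgv ▸ hdom
    refine ⟨v, ⟨by omega, hdom⟩, ?_⟩
    rintro v' ⟨hv'1, hv'2⟩
    obtain ⟨w', hw', he'⟩ := gpos v' hv'1
    rcases eq_or_ne v' u with rfl | hv'u
    · rcases eq_or_ne v v' with rfl | hvu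
      · rfl
      · -- v ≠ u = v' : both (v',w') and (v,w) dominate (v', w')
        exfalso
        obtain ⟨z, hz, hu2⟩ := hfd (v', w')
        have e1 := hu2 (v', w') ⟨hw', by rw [SimpleGraph.dist_self]; exact Nat.zero_le _⟩
        have e2 := hu2 (v, w) ⟨hz1, ?_⟩
        · exact hvu ((Prod.mk.injEq .. ▸ (e2.trans e1.symm)).1)
        · calc (lexProd G H).dist (v', w') (v, w) ≤ G.dist v' v :=
                lex_dist_le hG _ _ (Ne.symm hvu)
            _ ≤ f (v, w) := hduv (Ne.symm hvu)
    · rcases eq_or_ne v u with rfl | hvu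
      · -- v = u, v' ≠ u : both dominate (v, w)
        exfalso
        obtain ⟨z, hz, hu2⟩ := hfd (v, w)
        have e1 := hu2 (v, w) ⟨hz1, by rw [SimpleGraph.dist_self]; exact Nat.zero_le _⟩
        have e2 := hu2 (v', w') ⟨hw', ?_⟩
        · exact hv'u ((Prod.mk.injEq .. ▸ (e2.trans e1.symm)).1)
        · calc (lexProd G H).dist (v, w) (v', w') ≤ G.dist v v' :=
                lex_dist_le hG _ _ hv'u.symm
            _ ≤ f (v', w') := he' ▸ hv'2
      · -- both ≠ u : both dominate (u, b₀)
        have e2 := huniq (v', w') ⟨hw', ?_⟩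
        · exact (Prod.mk.injEq .. ▸ e2).1
        · calc (lexProd G H).dist (u, b₀) (v', w') ≤ G.dist u v' :=
                lex_dist_le hG _ _ (Ne.symm hv'u)
            _ ≤ f (v', w') := he' ▸ hv'2
end

section
/- If m ≥ 2 and rad(H) ≥ 2, then mcr(P_m·H) = 2 and γ_{eb2}(P_m·H) = 2⌈m/5⌉. -/
open SimpleGraph

lemma exists_center {m : ℕ} (t : ℕ)
    (ht : (t = 0 ∧ (m % 5 = 1 ∨ m % 5 = 2)) ∨ (t = 2 ∧ ¬(m % 5 = 1 ∨ m % 5 = 2)))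
    (i : ℕ) (hi : i < m) :
    ∃ c, c < m ∧ c % 5 = t ∧ Nat.dist i c ≤ 2 := by
  refine ⟨i + 2 - (i + 2 - t) % 5, by omega, by omega, by simp [Nat.dist]; omega⟩

lemma center_unique {i c₁ c₂ : ℕ} (h : c₁ % 5 = c₂ % 5)
    (h1 : Nat.dist i c₁ ≤ 2) (h2 : Nat.dist i c₂ ≤ 2) : c₁ = c₂ := by
  simp [Nat.dist] at h1 h2; omega

lemma card_centers {m : ℕ} (t : ℕ)
    (ht : (t = 0 ∧ (m % 5 = 1 ∨ m % 5 = 2)) ∨ (t = 2 ∧ ¬(m % 5 = 1 ∨ m % 5 = 2))) :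
    (Finset.univ.filter (fun i : Fin m => i.val % 5 = t)).card = (m + 4) / 5 := by
  rw [← Finset.card_range ((m + 4) / 5)]
  refine Finset.card_bij' (fun a _ => a.val / 5)
    (fun j hj => ⟨5 * j + t, ?_⟩) ?_ ?_ ?_ ?_
  · have := Finset.mem_range.mp hj; omega
  · intro a ha
    simp only [Finset.mem_filter] at ha
    have := a.isLt
    simp only [Finset.mem_range]
    omega
  · intro a ha
    simp only [Finset.mem_filter, Finset.mem_univ, true_and]
    have := Finset.mem_range.mp ha
    show (5 * a + t) % 5 = t
    omega
  · intro a ha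
    simp only [Finset.mem_filter] at ha
    apply Fin.ext
    show 5 * (a.val / 5) + t = a.val
    omega
  · intro a ha
    have := Finset.mem_range.mp ha
    show (5 * a + t) / 5 = a
    omega

section GraphAux
variable {β : Type*} {H : SimpleGraph β} {m : ℕ}

lemma layer_adj {i j : Fin m} (h : i.val + 1 = j.val ∨ j.val + 1 = i.val) (v w : β) :
    (lexProd (pathGraph m) H).Adj (i, v) (j, w) :=
  Or.inl (pathGraph_adj.mpr h)

lemma layer_dist_le_walk {x y : Fin m × β} (p : (lexProd (pathGraph m) H).Walk x y) :
    Nat.dist x.1.val y.1.val ≤ p.length := by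
  induction p with
  | nil => simp [Nat.dist_self]
  | @cons a b c h p ih =>
    have h1 : Nat.dist a.1.val b.1.val ≤ 1 := by
      rcases h with h | ⟨e, _⟩
      · rw [pathGraph_adj] at h
        simp [Nat.dist]; omega
      · simp [e, Nat.dist_self]
    calc Nat.dist a.1.val c.1.val
        ≤ Nat.dist a.1.val b.1.val + Nat.dist b.1.val c.1.val :=
          Nat.dist.triangle_inequality _ _ _
      _ ≤ 1 + p.length := by omega
      _ = (Walk.cons h p).length := by simp [Walk.length_cons]; omega

lemma dist_le_two (hm : 2 ≤ m) (x y : Fin m × β)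
    (h : Nat.dist x.1.val y.1.val ≤ 2) :
    (lexProd (pathGraph m) H).dist x y ≤ 2 := by
  by_cases hxy : x = y
  · subst hxy
    rw [SimpleGraph.dist_self]
    omega
  obtain ⟨i, v⟩ := x
  obtain ⟨j, w⟩ := y
  by_cases hij : i = j
  · subst hij
    have h0 : (if i.val = 0 then 1 else i.val - 1) < m := by split <;> omega
    set k : Fin m := ⟨if i.val = 0 then 1 else i.val - 1, h0⟩ with hk
    have hk2 : k.val + 1 = i.val ∨ i.val + 1 = k.val := by
      show (if i.val = 0 then 1 else i.val - 1) + 1 = i.val ∨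
        i.val + 1 = (if i.val = 0 then 1 else i.val - 1)
      split <;> omega
    have e1 : i.val + 1 = k.val ∨ k.val + 1 = i.val := by omega
    have e2 : k.val + 1 = i.val ∨ i.val + 1 = k.val := by omega
    have h1 : (lexProd (pathGraph m) H).Adj (i, v) (k, v) := layer_adj e1 _ _
    have h2 : (lexProd (pathGraph m) H).Adj (k, v) (i, w) := layer_adj e2 _ _
    exact (SimpleGraph.dist_le (Walk.cons h1 (Walk.cons h2 Walk.nil))).trans (by simp)
  · have hij' : i.val ≠ j.val := fun hc => hij (Fin.ext hc)
    simp only [Nat.dist] at h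
    rcases Nat.lt_or_ge (i.val - j.val + (j.val - i.val)) 2 with hd | hd
    · have : (lexProd (pathGraph m) H).Adj (i, v) (j, w) := by
        apply layer_adj; omega
      exact (SimpleGraph.dist_le (Walk.cons this Walk.nil)).trans (by simp)
    · have hmid : (i.val + j.val) / 2 < m := by have := i.isLt; have := j.isLt; omega
      set k : Fin m := ⟨(i.val + j.val) / 2, hmid⟩ with hk
      have hkv : k.val = (i.val + j.val) / 2 := rfl
      have h1 : (lexProd (pathGraph m) H).Adj (i, v) (k, v) :=
        layer_adj (by omega) _ _
      have h2 : (lexProd (pathGraph m) H).Adj (k, v) (j, w) :=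
        layer_adj (by omega) _ _
      exact (SimpleGraph.dist_le (Walk.cons h1 (Walk.cons h2 Walk.nil))).trans (by simp)

lemma lex_preconnected (hm : 2 ≤ m) : (lexProd (pathGraph m) H).Preconnected := by
  have key : ∀ n (x y : Fin m × β), Nat.dist x.1.val y.1.val = n →
      (lexProd (pathGraph m) H).Reachable x y := by
    intro n
    induction n with
    | zero =>
      intro x y hxy
      obtain ⟨i, v⟩ := x
      obtain ⟨j, w⟩ := y
      have : i = j := Fin.ext (Nat.eq_of_dist_eq_zero hxy)
      subst this
      have h0 : (if i.val = 0 then 1 else i.val - 1) < m := by split <;> omega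
      set k : Fin m := ⟨if i.val = 0 then 1 else i.val - 1, h0⟩ with hk
      have hk2 : k.val + 1 = i.val ∨ i.val + 1 = k.val := by
        show (if i.val = 0 then 1 else i.val - 1) + 1 = i.val ∨
          i.val + 1 = (if i.val = 0 then 1 else i.val - 1)
        split <;> omega
      have e1 : i.val + 1 = k.val ∨ k.val + 1 = i.val := by omega
      have e2 : k.val + 1 = i.val ∨ i.val + 1 = k.val := by omega
      have h1 : (lexProd (pathGraph m) H).Adj (i, v) (k, v) := layer_adj e1 _ _
      have h2 : (lexProd (pathGraph m) H).Adj (k, v) (i, w) := layer_adj e2 _ _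
      exact (Walk.cons h1 (Walk.cons h2 Walk.nil)).reachable
    | succ n ih =>
      intro x y hxy
      obtain ⟨i, v⟩ := x
      obtain ⟨j, w⟩ := y
      simp only [Nat.dist] at hxy
      rcases Nat.lt_or_ge i.val j.val with hlt | hge
      · have h0 : i.val + 1 < m := by have := j.isLt; omega
        set k : Fin m := ⟨i.val + 1, h0⟩ with hk
        have hkv : k.val = i.val + 1 := rfl
        have e1 : i.val + 1 = k.val ∨ k.val + 1 = i.val := by omega
        have h1 : (lexProd (pathGraph m) H).Adj (i, v) (k, v) := layer_adj e1 _ _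
        have h2 : Nat.dist k.val j.val = n := by simp only [Nat.dist]; omega
        exact h1.reachable.trans (ih (k, v) (j, w) h2)
      · have hne : i.val ≠ j.val := by omega
        have h0 : i.val - 1 < m := by have := i.isLt; omega
        set k : Fin m := ⟨i.val - 1, h0⟩ with hk
        have hkv : k.val = i.val - 1 := rfl
        have e1 : i.val + 1 = k.val ∨ k.val + 1 = i.val := by omega
        have h1 : (lexProd (pathGraph m) H).Adj (i, v) (k, v) := layer_adj e1 _ _
        have h2 : Nat.dist k.val j.val = n := by simp only [Nat.dist]; omega
        exact h1.reachable.trans (ih (k, v) (j, w) h2)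
  intro x y
  exact key _ x y rfl

lemma lex_connected_s14 [Nonempty β] (hm : 2 ≤ m) : (lexProd (pathGraph m) H).Connected := by
  have : Nonempty (Fin m × β) := ⟨(⟨0, by omega⟩, Classical.arbitrary β)⟩
  exact ⟨lex_preconnected hm⟩

lemma layer_dist_le_dist (hm : 2 ≤ m) (x y : Fin m × β) :
    Nat.dist x.1.val y.1.val ≤ (lexProd (pathGraph m) H).dist x y := by
  classical
  obtain ⟨p, hp⟩ := ((lex_preconnected hm (H := H)) x y).exists_walk_length_eq_dist
  rw [← hp]
  exact layer_dist_le_walk p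

lemma eq_or_adj_of_dist_le_one (hm : 2 ≤ m) {x y : Fin m × β}
    (h : (lexProd (pathGraph m) H).dist x y ≤ 1) :
    x = y ∨ (lexProd (pathGraph m) H).Adj x y := by
  obtain ⟨p, hp⟩ := ((lex_preconnected hm (H := H)) x y).exists_walk_length_eq_dist
  cases p with
  | nil => exact Or.inl rfl
  | cons h' q =>
    cases q with
    | nil => exact Or.inr h'
    | cons h'' r =>
      exfalso
      simp only [Walk.length_cons] at hp
      omega

lemma far_vertex [Fintype β] [Nonempty β] (hrad : 2 ≤ grad H) (v : β) :
    ∃ w, w ≠ v ∧ ¬ H.Adj v w := by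
  rw [grad] at hrad
  have hecc : 2 ≤ ecc H v := (Finset.le_inf'_iff _ _).mp hrad v (Finset.mem_univ v)
  have : ∃ w, 2 ≤ H.dist v w := by
    by_contra hc
    push_neg at hc
    have : ecc H v ≤ 1 := Finset.sup_le fun u _ => by have := hc u; omega
    omega
  obtain ⟨w, hw⟩ := this
  refine ⟨w, fun e => ?_, fun ha => ?_⟩
  · subst e; rw [SimpleGraph.dist_self] at hw; omega
  · have := SimpleGraph.dist_le (Walk.cons ha Walk.nil)
    simp at this; omega
end GraphAux

section Core
variable {β : Type*} [Fintype β] [Nonempty β] {H : SimpleGraph β} {m : ℕ}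

lemma support_eq_two (hm : 2 ≤ m) (hrad : 2 ≤ grad H) {f : Fin m × β → ℕ}
    (hf : IsELDB (lexProd (pathGraph m) H) 2 f) {d : Fin m × β} (hd : 1 ≤ f d) :
    f d = 2 := by
  by_contra hne
  have hfd : f d = 1 := by have := hf.1 d; omega
  obtain ⟨i, v⟩ := d
  obtain ⟨w, hwv, hwa⟩ := far_vertex hrad v
  -- d does not dominate u = (i, w)
  have hnd : ¬ ((lexProd (pathGraph m) H).dist (i, w) (i, v) ≤ f (i, v)) := by
    rw [hfd]
    intro hle
    rcases eq_or_adj_of_dist_le_one hm hle with he | ha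
    · exact hwv (congrArg Prod.snd he)
    · rcases ha with h | ⟨_, h⟩
      · exact (pathGraph m).irrefl h
      · exact hwa h.symm
  obtain ⟨d', ⟨hd'1, hd'2⟩, _⟩ := hf.2 (i, w)
  have hdd' : d' ≠ (i, v) := fun e => hnd (e ▸ hd'2)
  obtain ⟨i', v'⟩ := d'
  -- both (i,v) and (i',v') dominate a common vertex z
  have double : ∃ z, ((lexProd (pathGraph m) H).dist z (i, v) ≤ f (i, v)) ∧
      ((lexProd (pathGraph m) H).dist z (i', v') ≤ f (i', v')) := by
    by_cases hii : i' = i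
    · subst hii
      have h0 : (if i'.val = 0 then 1 else i'.val - 1) < m := by split <;> omega
      set k : Fin m := ⟨if i'.val = 0 then 1 else i'.val - 1, h0⟩ with hk
      have hk2 : k.val + 1 = i'.val ∨ i'.val + 1 = k.val := by
        show (if i'.val = 0 then 1 else i'.val - 1) + 1 = i'.val ∨
          i'.val + 1 = (if i'.val = 0 then 1 else i'.val - 1)
        split <;> omega
      refine ⟨(k, v), ?_, ?_⟩
      · have := SimpleGraph.dist_le (Walk.cons (layer_adj (H := H) hk2 v v) Walk.nil)
        simp at this; omega
      · have := SimpleGraph.dist_le (Walk.cons (layer_adj (H := H) hk2 v v') Walk.nil)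
        simp at this; omega
    · refine ⟨(i, v), by rw [SimpleGraph.dist_self]; omega, ?_⟩
      rcases Nat.lt_or_ge (f (i', v')) 2 with hf1 | hf2
      · -- f d' = 1 : u adjacent to d', so (i,v) adjacent to d'
        have h1 : (lexProd (pathGraph m) H).dist (i, w) (i', v') ≤ 1 := by omega
        rcases eq_or_adj_of_dist_le_one hm h1 with he | ha
        · exact absurd (congrArg Prod.fst he) (fun e => hii e.symm)
        · rcases ha with h | ⟨e, _⟩
          · have := SimpleGraph.dist_le
              (Walk.cons (layer_adj (H := H) (pathGraph_adj.mp h) v v') Walk.nil)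
            simp at this; omega
          · exact absurd e.symm hii
      · -- f d' = 2 : layer distance at most 2
        have hld : Nat.dist i.val i'.val ≤ 2 := by
          have h1 := layer_dist_le_dist (H := H) hm (i, w) (i', v')
          have h2 := hf.1 (i', v')
          simp only at h1
          omega
        have := dist_le_two (H := H) hm ((i : Fin m), v) ((i' : Fin m), v') hld
        omega
  obtain ⟨z, hz1, hz2⟩ := double
  obtain ⟨z₀, _, hzuniq⟩ := hf.2 z
  have e1 := hzuniq (i, v) ⟨by omega, hz1⟩
  have e2 := hzuniq (i', v') ⟨by omega, hz2⟩
  exact hdd' (e2.trans e1.symm)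
end Core

section Core2
variable {β : Type*} [Fintype β] [Nonempty β] {H : SimpleGraph β} {m : ℕ}

lemma cost_lower (hm : 2 ≤ m) (hrad : 2 ≤ grad H) {f : Fin m × β → ℕ}
    (hf : IsELDB (lexProd (pathGraph m) H) 2 f) :
    2 * ((m + 4) / 5) ≤ cost f := by
  classical
  set C : Finset (Fin m × β) := Finset.univ.filter (fun d => 1 ≤ f d) with hC
  have hC2 : ∀ d ∈ C, f d = 2 := fun d hd =>
    support_eq_two hm hrad hf (Finset.mem_filter.mp hd).2
  have hcost : cost f = 2 * C.card := by
    rw [cost, ← Finset.sum_filter_add_sum_filter_not Finset.univ (fun d => 1 ≤ f d) f]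
    rw [Finset.sum_congr rfl hC2, Finset.sum_const, smul_eq_mul,
      Finset.sum_eq_zero (fun d hd => by
        have := (Finset.mem_filter.mp hd).2; omega)]
    ring
  -- covering
  have hcover : (Finset.univ : Finset (Fin m)) ⊆
      C.biUnion (fun d => Finset.univ.filter fun i : Fin m => Nat.dist i.val d.1.val ≤ 2) := by
    intro i _
    obtain ⟨d, ⟨hd1, hd2⟩, _⟩ := hf.2 (i, Classical.arbitrary β)
    have hdC : d ∈ C := Finset.mem_filter.mpr ⟨Finset.mem_univ _, hd1⟩
    refine Finset.mem_biUnion.mpr ⟨d, hdC, ?_⟩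
    refine Finset.mem_filter.mpr ⟨Finset.mem_univ _, ?_⟩
    have h1 := layer_dist_le_dist (H := H) hm (i, Classical.arbitrary β) d
    have h2 := hf.1 d
    simp only at h1
    omega
  have hcard5 : ∀ d : Fin m × β,
      (Finset.univ.filter fun i : Fin m => Nat.dist i.val d.1.val ≤ 2).card ≤ 5 := by
    intro d
    have : (Finset.univ.filter fun i : Fin m => Nat.dist i.val d.1.val ≤ 2).card ≤
        (Finset.Icc (d.1.val - 2) (d.1.val + 2)).card := by
      apply Finset.card_le_card_of_injOn Fin.val
      · intro a ha
        have := (Finset.mem_filter.mp ha).2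
        simp only [Nat.dist] at this
        simp only [Finset.mem_coe, Finset.mem_Icc]
        omega
      · exact fun a _ b _ h => Fin.ext h
    rw [Nat.card_Icc] at this
    omega
  have hm5 : m ≤ 5 * C.card := by
    have h1 := Finset.card_le_card hcover
    have h2 := Finset.card_biUnion_le (s := C)
      (t := fun d => Finset.univ.filter fun i : Fin m => Nat.dist i.val d.1.val ≤ 2)
    have h3 : ∑ d ∈ C, (Finset.univ.filter
        fun i : Fin m => Nat.dist i.val d.1.val ≤ 2).card ≤ ∑ _d ∈ C, 5 :=
      Finset.sum_le_sum fun d _ => hcard5 d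
    rw [Finset.sum_const, smul_eq_mul] at h3
    simp only [Finset.card_univ, Fintype.card_fin] at h1
    omega
  rw [hcost]
  omega

lemma construction (hH : H.Connected) (hm : 2 ≤ m) :
    ∃ f : Fin m × β → ℕ, IsELDB (lexProd (pathGraph m) H) 2 f ∧
      cost f = 2 * ((m + 4) / 5) := by
  classical
  obtain ⟨t, ht⟩ : ∃ t, (t = 0 ∧ (m % 5 = 1 ∨ m % 5 = 2)) ∨
      (t = 2 ∧ ¬(m % 5 = 1 ∨ m % 5 = 2)) := by
    by_cases h : m % 5 = 1 ∨ m % 5 = 2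
    · exact ⟨0, Or.inl ⟨rfl, h⟩⟩
    · exact ⟨2, Or.inr ⟨rfl, h⟩⟩
  set v₀ : β := Classical.arbitrary β with hv₀
  set f : Fin m × β → ℕ :=
    fun x => if x.1.val % 5 = t ∧ x.2 = v₀ then 2 else 0 with hfdef
  have hfval : ∀ x : Fin m × β, f x = if x.1.val % 5 = t ∧ x.2 = v₀ then 2 else 0 :=
    fun x => rfl
  refine ⟨f, ⟨fun x => by rw [hfval]; split <;> omega, ?_⟩, ?_⟩
  · intro u
    obtain ⟨i, w⟩ := u
    obtain ⟨c, hc1, hc2, hc3⟩ := exists_center t ht i.val i.isLt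
    have hfc : f (⟨c, hc1⟩, v₀) = 2 := by
      rw [hfval]; exact if_pos ⟨hc2, rfl⟩
    refine ⟨(⟨c, hc1⟩, v₀), ⟨by omega, ?_⟩, ?_⟩
    · rw [hfc]
      exact dist_le_two (H := H) hm (i, w) (⟨c, hc1⟩, v₀) hc3
    · rintro ⟨j, x⟩ ⟨hx1, hx2⟩
      have hcond : j.val % 5 = t ∧ x = v₀ := by
        by_contra hcc
        rw [hfval, if_neg hcc] at hx1
        omega
      have hfjx : f (j, x) = 2 := by rw [hfval, if_pos hcond]
      rw [hfjx] at hx2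
      have hld : Nat.dist i.val j.val ≤ 2 := by
        have h1 := layer_dist_le_dist (H := H) hm (i, w) (j, x)
        simp only at h1
        omega
      have : j.val = c := center_unique (hcond.1.trans hc2.symm) hld hc3
      exact Prod.ext (Fin.ext this) hcond.2
  · rw [cost, Fintype.sum_prod_type]
    have hrow : ∀ i : Fin m,
        (∑ v : β, f (i, v)) = if i.val % 5 = t then 2 else 0 := by
      intro i
      by_cases h : i.val % 5 = t
      · rw [if_pos h]
        have : ∀ v : β, f (i, v) = if v = v₀ then 2 else 0 := by
          intro v; rw [hfval]; simp [h]
        rw [Finset.sum_congr rfl (fun v _ => this v)]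
        simp
      · rw [if_neg h]
        apply Finset.sum_eq_zero
        intro v _
        rw [hfval, if_neg (fun hc => h hc.1)]
    rw [Finset.sum_congr rfl (fun i _ => hrow i), ← Finset.sum_filter,
      Finset.sum_const, smul_eq_mul, card_centers t ht, mul_comm]
end Core2


/-- If m ≥ 2 and rad(H) ≥ 2, then mcr(P_m·H) = 2 and γ_{eb2}(P_m·H) = 2⌈m/5⌉. -/
theorem stmt14 {β : Type*} [Fintype β] [Nonempty β]
    (H : SimpleGraph β) (hH : H.Connected) (m : ℕ) (hm : 2 ≤ m)
    (hrad : 2 ≤ grad H) :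
    sInf {k | ∃ f : Fin m × β → ℕ, IsELDB (lexProd (pathGraph m) H) k f} = 2 ∧
      sInf {c | ∃ f : Fin m × β → ℕ,
          IsELDB (lexProd (pathGraph m) H) 2 f ∧ cost f = c} =
        2 * ((m + 4) / 5) := by
  obtain ⟨f₀, hf₀, hc₀⟩ := construction (H := H) hH hm
  have h2S : (2 : ℕ) ∈ {k | ∃ f : Fin m × β → ℕ,
      IsELDB (lexProd (pathGraph m) H) k f} := ⟨f₀, hf₀⟩
  constructor
  · refine le_antisymm (Nat.sInf_le h2S) (le_csInf ⟨2, h2S⟩ ?_)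
    rintro k ⟨f, hf⟩
    by_contra hk
    push_neg at hk
    have hf2 : IsELDB (lexProd (pathGraph m) H) 2 f :=
      ⟨fun v => le_trans (hf.1 v) (by omega), hf.2⟩
    obtain ⟨d, ⟨hd1, _⟩, _⟩ := hf.2 (⟨0, by omega⟩, Classical.arbitrary β)
    have h1 := support_eq_two hm hrad hf2 hd1
    have h2 := hf.1 d
    omega
  · have hmem : 2 * ((m + 4) / 5) ∈ {c | ∃ f : Fin m × β → ℕ,
        IsELDB (lexProd (pathGraph m) H) 2 f ∧ cost f = c} := ⟨f₀, hf₀, hc₀⟩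
    refine le_antisymm (Nat.sInf_le hmem) (le_csInf ⟨_, hmem⟩ ?_)
    rintro c ⟨f, hf, rfl⟩
    exact cost_lower hm hrad hf
end
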